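/- The discrete semilattice (ℕ, max) has no universal 𝓐𝓗-completion: there is no 𝓐𝓗-complete Hausdorff topological semilattice S containing (ℕ, max) densely such that every continuous homomorphism from (ℕ, max) to an 𝓐𝓗-complete Hausdorff topological semilattice extends to a continuous homomorphism on S. -/

import Mathlib

/-!
For a free filter `F` on `ℕ` (`F ≤ cofinite`), the space `ℕ_F = ℕ ∪ {F}` (`nfTop F` with
`maxOp`) is an 𝓐𝓗-complete topological semilattice. If `S` were a universal 𝓐𝓗-completion of
`(ℕ, max)`, the extension of `ℕ → ℕ_cofinite` to `S` would have closed image containing `ℕ`,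
hence the point at infinity, so `S` has a point `s` outside `ℕ`. The trace `ℱ` on `ℕ` of the
neighbourhood filter of `s` is free, and extending `ℕ → ℕ_G` shows that `ℱ` refines every free
filter `G`, in particular `cofinite ⊓ 𝓟 E` for both `E` = the evens and `E` = the odds: then
`ℱ = ⊥`.
-/

open Topology Set

/-- A filter is free if the intersection of all its members is empty. -/
def FreeF (F : Filter ℕ) : Prop := ⋂₀ F.sets = ∅

/-- The topology on ℕ_ℱ = ℕ ∪ {ℱ} (modelled as `Option ℕ`, with `none` the point ℱ):
all points of ℕ are isolated, and the sets F ∪ {ℱ}, F ∈ ℱ, form a neighbourhood base at ℱ. -/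
def nfTop (F : Filter ℕ) : TopologicalSpace (Option ℕ) where
  IsOpen U := none ∈ U → {n : ℕ | some n ∈ U} ∈ F
  isOpen_univ := fun _ => by simp
  isOpen_inter := fun U V hU hV h => Filter.inter_mem (hU h.1) (hV h.2)
  isOpen_sUnion := fun S hS h => by
    obtain ⟨U, hUS, hnU⟩ := h
    exact Filter.mem_of_superset (hS U hUS hnU) fun n hn => ⟨U, hUS, hn⟩

/-- min on ℕ extended to ℕ_ℱ by min(n,ℱ) = n, min(ℱ,ℱ) = ℱ. -/
def minOp : Option ℕ → Option ℕ → Option ℕ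
  | none, y => y
  | some a, none => some a
  | some a, some b => some (min a b)

/-- max on ℕ extended to ℕ_ℱ by max(n,ℱ) = ℱ = max(ℱ,ℱ). -/
def maxOp : Option ℕ → Option ℕ → Option ℕ
  | none, _ => none
  | _, none => none
  | some a, some b => some (max a b)

/-- `X` with operation `op` is a (Hausdorff) topological semilattice. -/
structure IsTopSemilattice (X : Type*) [TopologicalSpace X] (op : X → X → X) : Prop where
  t2 : T2Space X
  comm : ∀ a b, op a b = op b a
  idem : ∀ a, op a a = a
  assoc : ∀ a b c, op (op a b) c = op a (op b c)
  cont : Continuous fun p : X × X => op p.1 p.2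

/-- 𝓗-completeness: the image under any topological embedding which is a semilattice
homomorphism into a Hausdorff topological semilattice is closed. -/
def HComplete (X : Type*) [TopologicalSpace X] (op : X → X → X) : Prop :=
  ∀ (Y : Type*) [TopologicalSpace Y] (opY : Y → Y → Y), IsTopSemilattice Y opY →
    ∀ f : X → Y, Topology.IsEmbedding f →
      (∀ a b, f (op a b) = opY (f a) (f b)) → IsClosed (Set.range f)

/-- 𝓐𝓗-completeness: the image under any continuous semilattice homomorphism
into a Hausdorff topological semilattice is closed. -/
def AHComplete (X : Type*) [TopologicalSpace X] (op : X → X → X) : Prop :=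
  ∀ (Y : Type*) [TopologicalSpace Y] (opY : Y → Y → Y), IsTopSemilattice Y opY →
    ∀ f : X → Y, Continuous f →
      (∀ a b, f (op a b) = opY (f a) (f b)) → IsClosed (Set.range f)

open Filter

theorem IsTopSemilattice.continuous_op {X : Type*} [TopologicalSpace X] {op : X → X → X}
    (hX : IsTopSemilattice X op) (x : X) : Continuous (op x) :=
  hX.cont.comp (continuous_const.prodMk continuous_id)

theorem IsTopSemilattice.ulift {X : Type*} [TopologicalSpace X] {op : X → X → X}
    (hX : IsTopSemilattice X op) :
    IsTopSemilattice (ULift X) fun a b => ULift.up (op a.down b.down) where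
  t2 := by have := hX.t2; infer_instance
  comm a b := by rw [hX.comm]
  idem a := by rw [hX.idem]
  assoc a b c := by rw [hX.assoc]
  cont := continuous_uliftUp.comp <| hX.cont.comp <|
    (continuous_uliftDown.comp continuous_fst).prodMk (continuous_uliftDown.comp continuous_snd)

theorem AHComplete.isClosed_range.{u, v, w} {X : Type u} [TopologicalSpace X] {op : X → X → X}
    (hX : AHComplete.{u, max v w} X op) {Y : Type v} [TopologicalSpace Y] {opY : Y → Y → Y}
    (hY : IsTopSemilattice Y opY) {f : X → Y} (hf : Continuous f)
    (hhom : ∀ a b, f (op a b) = opY (f a) (f b)) : IsClosed (range f) := by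
  have h := hX (ULift.{w} Y) _ hY.ulift (ULift.up ∘ f) (continuous_uliftUp.comp hf)
    fun a b => by simp [hhom]
  rw [← Homeomorph.ulift.isClosed_preimage]
  convert h using 1
  ext ⟨y⟩
  simp [Homeomorph.ulift]

theorem DenseRange.comap_nhds_neBot {X α : Type*} [TopologicalSpace X] {ι : α → X}
    (hι : DenseRange ι) (x : X) : (comap ι (𝓝 x)).NeBot :=
  comap_neBot_iff_frequently.2 (mem_closure_iff_frequently.1 (hι x))

theorem comap_nhds_le_cofinite {X α : Type*} [TopologicalSpace X] [T1Space X] {ι : α → X} {x : X}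
    (hx : x ∉ range ι) : comap ι (𝓝 x) ≤ cofinite :=
  le_cofinite_iff_compl_singleton_mem.2 fun a =>
    mem_comap.2 ⟨{ι a}ᶜ, isOpen_compl_singleton.mem_nhds fun h => hx ⟨a, h.symm⟩,
      fun _ hb h => hb (congrArg ι h)⟩

theorem exists_neBot_le_cofinite_not_ge (ℱ : Filter ℕ) [ℱ.NeBot] :
    ∃ G : Filter ℕ, G ≤ cofinite ∧ G.NeBot ∧ ¬ ℱ ≤ G := by
  by_contra! h
  have hle_principal {E : Set ℕ} (hE : ∀ a, ∃ b ∈ E, a < b) : ℱ ≤ 𝓟 E :=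
    (h _ inf_le_left (cofinite_inf_principal_neBot_iff.2 (infinite_of_forall_exists_gt hE))).trans
      inf_le_right
  have hEven := hle_principal (E := {n | Even n}) fun a => ⟨2 * a + 2, ⟨a + 1, by ring⟩, by omega⟩
  have hOdd := hle_principal (E := {n | Even n}ᶜ) fun a => ⟨2 * a + 1, by simp, by omega⟩
  exact NeBot.ne ‹_› (le_bot_iff.1 (by simpa using le_inf hEven hOdd))

def nfBasicNhd (s : Set ℕ) : Option ℕ → Set (Option ℕ)
  | none => insert none (some '' s)
  | some n => {some n}

section nfTop

variable {F : Filter ℕ}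

theorem nfTop_nhds_some (n : ℕ) : @nhds _ (nfTop F) (some n) = pure (some n) :=
  (@isOpen_singleton_iff_nhds_eq_pure _ (nfTop F) _).1 fun h => by simp at h

theorem nfTop_hasBasis_nhds (x : Option ℕ) :
    (@nhds _ (nfTop F) x).HasBasis (· ∈ F) (nfBasicNhd · x) := by
  let := nfTop F
  refine ⟨fun V => ?_⟩
  cases x with
  | some n =>
    rw [nfTop_nhds_some, mem_pure]
    exact ⟨fun h => ⟨univ, univ_mem, singleton_subset_iff.2 h⟩, fun ⟨_, _, h⟩ => h rfl⟩
  | none =>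
    rw [mem_nhds_iff]
    constructor
    · rintro ⟨U, hUV, hU, hnU⟩
      exact ⟨_, hU hnU, insert_subset (hUV hnU) (image_subset_iff.2 fun n hn => hUV hn)⟩
    · rintro ⟨s, hs, hsV⟩
      refine ⟨nfBasicNhd s none, hsV, fun _ => mem_of_superset hs fun n hn => ?_, mem_insert _ _⟩
      exact mem_insert_of_mem _ (mem_image_of_mem _ hn)

theorem nfTop_tendsto_some : Tendsto some F (@nhds _ (nfTop F) none) :=
  (nfTop_hasBasis_nhds none).tendsto_right_iff.2 fun _ hs =>
    mem_of_superset hs fun _ hn => mem_insert_of_mem _ (mem_image_of_mem _ hn)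

theorem nfTop_comap_some_nhds_none_le : comap some (@nhds _ (nfTop F) none) ≤ F := fun s hs =>
  mem_comap.2 ⟨_, (nfTop_hasBasis_nhds none).mem_of_mem hs,
    fun n hn => by simpa [nfBasicNhd] using hn⟩

theorem nfTop_t2Space (hF : F ≤ cofinite) : @T2Space _ (nfTop F) := by
  let := nfTop F
  refine t2Space_iff_disjoint_nhds.2 fun x y hxy => ?_
  have hs : ({x.getD 0, y.getD 0}ᶜ : Set ℕ) ∈ F := hF (toFinite _).compl_mem_cofinite
  refine ((nfTop_hasBasis_nhds x).disjoint_iff (nfTop_hasBasis_nhds y)).2 ⟨_, hs, _, hs, ?_⟩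
  cases x <;> cases y <;> simp_all [nfBasicNhd]

theorem maxOp_mem_nfBasicNhd {s : Set ℕ} {p q x y : Option ℕ}
    (hx : x ∈ nfBasicNhd (s ∩ Ioi (p.getD 0 + q.getD 0)) p)
    (hy : y ∈ nfBasicNhd (s ∩ Ioi (p.getD 0 + q.getD 0)) q) :
    maxOp x y ∈ nfBasicNhd s (maxOp p q) := by
  rcases p with _ | a <;> rcases q with _ | b <;>
    simp only [nfBasicNhd, Option.getD, zero_add, add_zero] at hx hy
  · rcases hx with rfl | ⟨m, ⟨hm, -⟩, rfl⟩
    · exact mem_insert _ _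
    rcases hy with rfl | ⟨n, ⟨hn, -⟩, rfl⟩
    · exact mem_insert _ _
    refine mem_insert_of_mem _ ⟨max m n, ?_, rfl⟩
    rcases max_choice m n with h | h <;> rw [h] <;> assumption
  · obtain rfl := hy
    rcases hx with rfl | ⟨m, ⟨hm, hbm⟩, rfl⟩
    · exact mem_insert _ _
    · exact mem_insert_of_mem _ ⟨m, hm, congrArg some (max_eq_left (le_of_lt hbm)).symm⟩
  · obtain rfl := hx
    rcases hy with rfl | ⟨m, ⟨hm, ham⟩, rfl⟩
    · exact mem_insert _ _
    · exact mem_insert_of_mem _ ⟨m, hm, congrArg some (max_eq_right (le_of_lt ham)).symm⟩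
  · obtain rfl := hx
    obtain rfl := hy
    rfl

theorem nfTop_continuous_maxOp (hF : F ≤ cofinite) :
    @Continuous _ _ (@instTopologicalSpaceProd _ _ (nfTop F) (nfTop F)) (nfTop F)
      fun p : Option ℕ × Option ℕ => maxOp p.1 p.2 := by
  let := nfTop F
  refine continuous_iff_continuousAt.2 fun ⟨p, q⟩ => ?_
  refine (((nfTop_hasBasis_nhds p).prod_nhds (nfTop_hasBasis_nhds q)).tendsto_iff
    (nfTop_hasBasis_nhds _)).2 fun s hs => ?_
  have ht : s ∩ Ioi (p.getD 0 + q.getD 0) ∈ F :=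
    inter_mem hs (hF (Nat.cofinite_eq_atTop ▸ Ioi_mem_atTop _))
  exact ⟨(_, _), ⟨ht, ht⟩, fun z hz => maxOp_mem_nfBasicNhd hz.1 hz.2⟩

theorem isTopSemilattice_nfTop (hF : F ≤ cofinite) : @IsTopSemilattice _ (nfTop F) maxOp := by
  let := nfTop F
  refine ⟨nfTop_t2Space hF, ?_, ?_, ?_, nfTop_continuous_maxOp hF⟩
  · rintro (_ | a) (_ | b) <;> simp [maxOp, max_comm]
  · rintro (_ | a) <;> simp [maxOp]
  · rintro (_ | a) (_ | b) (_ | c) <;> simp [maxOp, max_assoc]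

theorem ahComplete_nfTop [F.NeBot] : @AHComplete _ (nfTop F) maxOp := by
  let := nfTop F
  intro Y _ opY hY f hf hhom
  have := hY.t2
  refine isClosed_of_closure_subset fun y hy => ?_
  by_contra hyf
  -- Order `Y` by `z ≤ w ↔ opY z w = w`. Then `y ≤ f none`, and `f (some m) ≤ y` for every `m`
  -- since all but finitely many values of `f` lie above `f (some m)`; let `m` tend to `F`.
  have hy_le_top : opY (f none) y = f none := by
    refine closure_minimal ?_ (isClosed_eq (hY.continuous_op _) continuous_const) hy
    rintro _ ⟨x, rfl⟩
    exact (hhom _ _).symm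
  have hy_ge : ∀ m, opY (f (some m)) y = y := by
    intro m
    have hsub : range f ⊆ (f ∘ some) '' Iio m ∪ {z | opY (f (some m)) z = z} := by
      rintro _ ⟨_ | k, rfl⟩
      · exact Or.inr (hhom _ _).symm
      · rcases lt_or_ge k m with hk | hk
        · exact Or.inl ⟨k, hk, rfl⟩
        · exact Or.inr ((hhom _ _).symm.trans (congrArg (f ∘ some) (max_eq_right hk)))
    have hclosed := ((finite_Iio m).image (f ∘ some)).isClosed.union
      (isClosed_eq (hY.continuous_op (f (some m))) continuous_id)
    rcases closure_minimal hsub hclosed hy with ⟨k, -, rfl⟩ | h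
    · exact absurd ⟨_, rfl⟩ hyf
    · exact h
  have hlim : Tendsto (fun m => opY (f (some m)) y) F (𝓝 (opY (f none) y)) :=
    (hY.cont.tendsto _).comp
      (((hf.tendsto none).comp nfTop_tendsto_some).prodMk_nhds tendsto_const_nhds)
  have hy_top : opY (f none) y = y :=
    tendsto_nhds_unique hlim (by simpa only [hy_ge] using tendsto_const_nhds)
  exact hyf ⟨none, hy_le_top.symm.trans hy_top⟩

theorem nfTop_none_mem_closure_range_some [F.NeBot] :
    none ∈ closure[nfTop F] (range some) :=
  let := nfTop F
  mem_closure_of_tendsto nfTop_tendsto_some (Eventually.of_forall mem_range_self)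

end nfTop

theorem AHComplete.none_mem_range {S : Type*} [TopologicalSpace S] {op : S → S → S}
    (hS : AHComplete S op) {F : Filter ℕ} [F.NeBot] (hF : F ≤ cofinite) {g : S → Option ℕ}
    (hg : Continuous[_, nfTop F] g) (hhom : ∀ a b, g (op a b) = maxOp (g a) (g b))
    (hsome : range some ⊆ range g) : none ∈ range g :=
  let := nfTop F
  (hS.isClosed_range (isTopSemilattice_nfTop hF) hg hhom).closure_subset
    (closure_mono hsome nfTop_none_mem_closure_range_some)

theorem comap_nhds_le_of_continuous_extension {S : Type*} [TopologicalSpace S] [T1Space S]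
    {ι : ℕ → S} {s : S} (hs : s ∉ range ι) [(comap ι (𝓝 s)).NeBot] {G : Filter ℕ}
    {g : S → Option ℕ} (hg : Continuous[_, nfTop G] g) (hgι : ∀ n, g (ι n) = some n) :
    comap ι (𝓝 s) ≤ G := by
  let := nfTop G
  have h : Tendsto some (comap ι (𝓝 s)) (𝓝 (g s)) :=
    ((hg.tendsto s).comp tendsto_comap).congr hgι
  cases hgs : g s with
  | none => exact (tendsto_iff_comap.1 (hgs ▸ h)).trans nfTop_comap_some_nhds_none_le
  | some n =>
    rw [hgs, nfTop_nhds_some, tendsto_pure] at h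
    have hn := comap_nhds_le_cofinite hs (finite_singleton n).compl_mem_cofinite
    obtain ⟨k, hk, hkn⟩ := (h.and hn).exists
    exact (hkn (Option.some_injective _ hk)).elim

/-- the discrete semilattice (ℕ, max) has no universal 𝓐𝓗-completion. -/
theorem no_universal_AH_completion_max :
    ¬ ∃ (S : Type) (_ : TopologicalSpace S) (op : S → S → S),
      IsTopSemilattice S op ∧ AHComplete S op ∧
      ∃ ι : ℕ → S, Topology.IsEmbedding ι ∧
        (∀ m n : ℕ, ι (max m n) = op (ι m) (ι n)) ∧ DenseRange ι ∧
        ∀ (Y : Type) (_ : TopologicalSpace Y) (opY : Y → Y → Y),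
          IsTopSemilattice Y opY → AHComplete Y opY →
          ∀ f : ℕ → Y, Continuous f → (∀ m n : ℕ, f (max m n) = opY (f m) (f n)) →
            ∃ g : S → Y, Continuous g ∧
              (∀ a b : S, g (op a b) = opY (g a) (g b)) ∧ ∀ n : ℕ, g (ι n) = f n := by
  rintro ⟨S, _, op, hS, hAH, ι, -, -, hdense, huniv⟩
  have := hS.t2
  have extend (G : Filter ℕ) (hG : G ≤ cofinite) [G.NeBot] :=
    huniv _ (nfTop G) maxOp (isTopSemilattice_nfTop hG) ahComplete_nfTop some
      continuous_bot fun _ _ => rfl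
  obtain ⟨g₀, hg₀, hg₀hom, hg₀ι⟩ := extend cofinite le_rfl
  obtain ⟨s, hs⟩ := hAH.none_mem_range le_rfl hg₀ hg₀hom
    (range_subset_iff.2 fun n => ⟨ι n, hg₀ι n⟩)
  have hsι : s ∉ range ι := by
    rintro ⟨n, rfl⟩
    simp [hg₀ι] at hs
  have := hdense.comap_nhds_neBot s
  obtain ⟨G, hG, hGne, hsG⟩ := exists_neBot_le_cofinite_not_ge (comap ι (𝓝 s))
  obtain ⟨g, hg, -, hgι⟩ := extend G hG
  exact hsG (comap_nhds_le_of_continuous_extension hsι hg hgι)
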